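/- Under the gradient flow Ẇ_p = -(W_N⋯W_{p+1})ᵀ dE(X)(W_{p-1}⋯W_1)ᵀ, the end-to-end matrix X = W_N⋯W_1 satisfies Ẋ = -Σ_{p=1}^N (A_{p+1} A_{p+1}ᵀ) dE(X) (B_{p-1}ᵀ B_{p-1}), where A_p = W_N⋯W_p, B_p = W_p⋯W_1, and A_{N+1} = B_0 = I. -/

import Mathlib

open Matrix

/-- The partial product `A_{p+1}(t) = W_N(t) ⋯ W_{p+1}(t)` (with `Aprod N = 1`). -/
def Aprod (d : ℕ) (W : ℕ → ℝ → Matrix (Fin d) (Fin d) ℝ) (N p : ℕ) (t : ℝ) :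
    Matrix (Fin d) (Fin d) ℝ :=
  ((List.range (N - p)).map (fun q => W (N - q) t)).prod

/-- The partial product `B_p(t) = W_p(t) ⋯ W_1(t)` (with `Bprod 0 = 1`). -/
def Bprod (d : ℕ) (W : ℕ → ℝ → Matrix (Fin d) (Fin d) ℝ) (p : ℕ) (t : ℝ) :
    Matrix (Fin d) (Fin d) ℝ :=
  ((List.range p).map (fun q => W (p - q) t)).prod

lemma Bprod_succ (d : ℕ) (W : ℕ → ℝ → Matrix (Fin d) (Fin d) ℝ) (n : ℕ) (t : ℝ) :
    Bprod d W (n + 1) t = W (n + 1) t * Bprod d W n t := by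
  simp [Bprod, List.range_succ_eq_map, List.map_map, Function.comp_def, Nat.succ_sub_succ]

lemma Aprod_succ (d : ℕ) (W : ℕ → ℝ → Matrix (Fin d) (Fin d) ℝ) {n p : ℕ} (hp : p ≤ n)
    (t : ℝ) : Aprod d W (n + 1) p t = W (n + 1) t * Aprod d W n p t := by
  have h : n + 1 - p = (n - p) + 1 := by omega
  simp [Aprod, h, List.range_succ_eq_map, List.map_map, Function.comp_def, Nat.succ_sub_succ]

lemma Aprod_self (d : ℕ) (W : ℕ → ℝ → Matrix (Fin d) (Fin d) ℝ) (n : ℕ) (t : ℝ) :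
    Aprod d W n n t = 1 := by
  simp [Aprod]

lemma hasDerivAt_matrix_mul {d : ℕ} {M P : ℝ → Matrix (Fin d) (Fin d) ℝ}
    {M' P' : Matrix (Fin d) (Fin d) ℝ} {t : ℝ}
    (hM : ∀ i j, HasDerivAt (fun s => M s i j) (M' i j) t)
    (hP : ∀ i j, HasDerivAt (fun s => P s i j) (P' i j) t) (i j : Fin d) :
    HasDerivAt (fun s => (M s * P s) i j) ((M' * P t + M t * P') i j) t := by
  simp only [Matrix.mul_apply, Matrix.add_apply]
  have : HasDerivAt (fun s => ∑ k, M s i k * P s k j)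
      (∑ k, (M' i k * P t k j + M t i k * P' k j)) t :=
    HasDerivAt.fun_sum fun k _ => (hM i k).mul (hP k j)
  simpa [Finset.sum_add_distrib] using this

/-- Along the gradient flow `Ẇ_p = -(W_N⋯W_{p+1})ᵀ dE(X) (W_{p-1}⋯W_1)ᵀ`, the
end-to-end matrix `X = W_N ⋯ W_1` satisfies
`Ẋ = -Σ_{p=1}^N (A_{p+1} A_{p+1}ᵀ) dE(X) (B_{p-1}ᵀ B_{p-1})`, where
`A_{p+1} = W_N⋯W_{p+1}`, `B_{p-1} = W_{p-1}⋯W_1` (with `A_{N+1} = B_0 = 1`). -/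
theorem end_to_end_flow (N d : ℕ) (I : Set ℝ)
    (dE : Matrix (Fin d) (Fin d) ℝ → Matrix (Fin d) (Fin d) ℝ)
    (W : ℕ → ℝ → Matrix (Fin d) (Fin d) ℝ)
    (hODE : ∀ p, 1 ≤ p → p ≤ N → ∀ t ∈ I, ∀ i j,
      HasDerivAt (fun s => W p s i j)
        ((-( (Aprod d W N p t)ᵀ * dE (Bprod d W N t) * (Bprod d W (p - 1) t)ᵀ)) i j) t) :
    ∀ t ∈ I, ∀ i j,
      HasDerivAt (fun s => Bprod d W N s i j)
        ((-(∑ p ∈ Finset.Icc 1 N,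
            (Aprod d W N p t * (Aprod d W N p t)ᵀ) * dE (Bprod d W N t) *
              ((Bprod d W (p - 1) t)ᵀ * Bprod d W (p - 1) t))) i j) t := by
  intro t ht
  set E := dE (Bprod d W N t) with hE
  set W' : ℕ → Matrix (Fin d) (Fin d) ℝ :=
    fun p => -((Aprod d W N p t)ᵀ * E * (Bprod d W (p - 1) t)ᵀ) with hW'
  have key : ∀ n, n ≤ N → ∀ i j, HasDerivAt (fun s => Bprod d W n s i j)
      ((∑ p ∈ Finset.Icc 1 n,
        Aprod d W n p t * W' p * Bprod d W (p - 1) t) i j) t := by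
    intro n
    induction n with
    | zero =>
      intro _ i j
      have : (fun s => Bprod d W 0 s i j) = fun _ => (1 : Matrix (Fin d) (Fin d) ℝ) i j := by
        funext s; simp [Bprod]
      rw [this]
      simpa using hasDerivAt_const t ((1 : Matrix (Fin d) (Fin d) ℝ) i j)
    | succ n ih =>
      intro hn i j
      have hB : ∀ i j, HasDerivAt (fun s => Bprod d W n s i j)
          ((∑ p ∈ Finset.Icc 1 n, Aprod d W n p t * W' p * Bprod d W (p - 1) t) i j) t :=
        ih (by omega)
      have hWd : ∀ i j, HasDerivAt (fun s => W (n + 1) s i j) (W' (n + 1) i j) t := by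
        intro i j
        simpa [hW'] using hODE (n + 1) (by omega) hn t ht i j
      have hmul := hasDerivAt_matrix_mul (M := fun s => W (n + 1) s)
        (P := fun s => Bprod d W n s) hWd hB i j
      have heq : (fun s => (W (n + 1) s * Bprod d W n s) i j)
          = fun s => Bprod d W (n + 1) s i j := by
        funext s; rw [Bprod_succ]
      rw [heq] at hmul
      convert hmul using 2
      refine congrFun (congrFun ?_ i) j
      rw [Finset.sum_Icc_succ_top (by omega : 1 ≤ n + 1), Aprod_self, Matrix.one_mul]
      simp only [Nat.add_sub_cancel]
      rw [add_comm, Finset.mul_sum]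
      congr 1
      refine Finset.sum_congr rfl fun p hp => ?_
      rw [Aprod_succ d W (Finset.mem_Icc.mp hp).2 t]
      noncomm_ring
  intro i j
  convert key N le_rfl i j using 2
  refine congrFun (congrFun (?_ : (_ : Matrix (Fin d) (Fin d) ℝ) = _) i) j
  rw [neg_eq_iff_eq_neg, ← Finset.sum_neg_distrib]
  refine Finset.sum_congr rfl fun p _ => ?_
  simp only [hW', Matrix.mul_neg, Matrix.neg_mul, neg_neg, neg_inj, Matrix.mul_assoc]
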